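/- Let N be a positive integer and let p, d, r, ε, λ, t be integers with ε² = 1, satisfying r·λ - ε·p ≡ 1 (mod N), λ² ≡ ε·d (mod N), and d·r² = 2p + ε·t. Set b₁ := (-(1 + ε·p), r) and b₂ := (-ε·r·d, 1 + ε·p), and let L := {(z₁, z₂) ∈ ℤ² : z₁ + z₂·λ ≡ 0 (mod N)}. Then: (i) b₁ ∈ L and b₂ ∈ L; (ii) the determinant of the matrix with rows b₁, b₂ equals -(p² + 1 - t); (iii) if N = p² + 1 - t, then L equals the ℤ-span of {b₁, b₂}. -/

import Mathlib

/-!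
Membership of `b₁, b₂` in `L` is the eigenvalue relation `r λ - ε p ≡ 1` (for `b₂` combined with
`λ² ≡ ε d`), and the determinant identity is `d r² = 2p + ε t` rewritten. The determinant of any
two vectors of `L` is divisible by `N`, so when `|det(b₁, b₂)| = N` Cramer's rule expresses every
vector of `L` as an integral combination of `b₁` and `b₂`.
-/

/-- The lattice L = {(z₁, z₂) ∈ ℤ² : z₁ + z₂·λ ≡ 0 (mod N)} of
2-dimensional decompositions of 0. -/
def decompLattice2 (N : ℕ) (lam : ℤ) : Submodule ℤ (Fin 2 → ℤ) where
  carrier := {z | ((z 0 + z 1 * lam : ℤ) : ZMod N) = 0}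
  zero_mem' := by simp
  add_mem' := by
    intro a b ha hb
    simp only [Set.mem_setOf_eq, Pi.add_apply] at ha hb ⊢
    push_cast at ha hb ⊢
    linear_combination ha + hb
  smul_mem' := by
    intro m a ha
    simp only [Set.mem_setOf_eq, Pi.smul_apply, smul_eq_mul] at ha ⊢
    push_cast at ha ⊢
    linear_combination (m : ZMod N) * ha

theorem Matrix.det_of_fin_two_rows {R : Type*} [CommRing R] (v w : Fin 2 → R) :
    (Matrix.of ![v, w]).det = v 0 * w 1 - v 1 * w 0 := by
  simp only [Matrix.det_fin_two, Matrix.of_apply, Matrix.cons_val_zero, Matrix.cons_val_one]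

theorem mem_decompLattice2_iff_dvd {N : ℕ} {lam : ℤ} {z : Fin 2 → ℤ} :
    z ∈ decompLattice2 N lam ↔ (N : ℤ) ∣ z 0 + z 1 * lam :=
  ZMod.intCast_zmod_eq_zero_iff_dvd _ _

theorem dvd_det_of_mem_decompLattice2 {N : ℕ} {lam : ℤ} {v w : Fin 2 → ℤ}
    (hv : v ∈ decompLattice2 N lam) (hw : w ∈ decompLattice2 N lam) :
    (N : ℤ) ∣ (Matrix.of ![v, w]).det := by
  rw [mem_decompLattice2_iff_dvd] at hv hw
  have hdet : (Matrix.of ![v, w]).det = (v 0 + v 1 * lam) * w 1 - v 1 * (w 0 + w 1 * lam) := by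
    rw [Matrix.det_of_fin_two_rows]; ring
  rw [hdet]
  exact (hv.mul_right _).sub (hw.mul_left _)

/-- Cramer's rule writes `z` as `det(z, w) / D • v + det(v, z) / D • w` with `D = det(v, w)`,
and both numerators are multiples of `N = |D|`. -/
theorem span_pair_eq_decompLattice2 {N : ℕ} (hN : 0 < N) {lam : ℤ} {v w : Fin 2 → ℤ}
    (hv : v ∈ decompLattice2 N lam) (hw : w ∈ decompLattice2 N lam)
    (hdet : (Matrix.of ![v, w]).det.natAbs = N) :
    Submodule.span ℤ {v, w} = decompLattice2 N lam := by
  refine le_antisymm (Submodule.span_le.2 (Set.insert_subset_iff.2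
    ⟨hv, Set.singleton_subset_iff.2 hw⟩)) fun z hz => ?_
  have hD : (Matrix.of ![v, w]).det ≠ 0 := by omega
  have hDN : (Matrix.of ![v, w]).det ∣ N := Int.natAbs_dvd.1 (by rw [hdet])
  obtain ⟨a, ha⟩ := hDN.trans (dvd_det_of_mem_decompLattice2 hz hw)
  obtain ⟨b, hb⟩ := hDN.trans (dvd_det_of_mem_decompLattice2 hv hz)
  simp only [Matrix.det_of_fin_two_rows] at hD ha hb
  rw [Submodule.mem_span_pair]
  refine ⟨a, b, funext fun i => mul_left_cancel₀ hD ?_⟩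
  fin_cases i
  all_goals simp only [Fin.zero_eta, Fin.mk_one, Pi.add_apply, Pi.smul_apply, smul_eq_mul]
  · linear_combination -v 0 * ha - w 0 * hb
  · linear_combination -v 1 * ha - w 1 * hb

/-- The ready-made basis for reductions of quadratic ℚ-curves: if ε² = 1,
r·λ - ε·p ≡ 1 (mod N), λ² ≡ ε·d (mod N), and d·r² = 2p + ε·t, then
b₁ = (-(1 + ε·p), r) and b₂ = (-ε·r·d, 1 + ε·p) lie in L, the matrix with rows
b₁, b₂ has determinant -(p² + 1 - t), and if N = p² + 1 - t then b₁, b₂ span L. -/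
theorem qcurve_basis
    (N : ℕ) (hN : 0 < N) (p d r ε lam t : ℤ)
    (hε : ε ^ 2 = 1)
    (heig : ((r * lam - ε * p : ℤ) : ZMod N) = 1)
    (hsq : ((lam ^ 2 : ℤ) : ZMod N) = ((ε * d : ℤ) : ZMod N))
    (htr : d * r ^ 2 = 2 * p + ε * t) :
    (![-(1 + ε * p), r] ∈ decompLattice2 N lam ∧
      ![-(ε * r * d), 1 + ε * p] ∈ decompLattice2 N lam) ∧
    ((!![-(1 + ε * p), r; -(ε * r * d), 1 + ε * p] : Matrix (Fin 2) (Fin 2) ℤ).det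
        = -(p ^ 2 + 1 - t)) ∧
    ((N : ℤ) = p ^ 2 + 1 - t →
      Submodule.span ℤ
          ({![-(1 + ε * p), r], ![-(ε * r * d), 1 + ε * p]} : Set (Fin 2 → ℤ))
        = decompLattice2 N lam) := by
  push_cast at heig hsq
  have hb₁ : ![-(1 + ε * p), r] ∈ decompLattice2 N lam := by
    change ((-(1 + ε * p) + r * lam : ℤ) : ZMod N) = 0
    push_cast
    linear_combination heig
  have hb₂ : ![-(ε * r * d), 1 + ε * p] ∈ decompLattice2 N lam := by
    change ((-(ε * r * d) + (1 + ε * p) * lam : ℤ) : ZMod N) = 0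
    push_cast
    linear_combination (-lam) * heig + (r : ZMod N) * hsq
  have hdet : (!![-(1 + ε * p), r; -(ε * r * d), 1 + ε * p]).det = -(p ^ 2 + 1 - t) := by
    rw [Matrix.det_fin_two_of]
    linear_combination ε * htr + (t - p ^ 2) * hε
  refine ⟨⟨hb₁, hb₂⟩, hdet, fun hNt => span_pair_eq_decompLattice2 hN hb₁ hb₂ ?_⟩
  change (!![-(1 + ε * p), r; -(ε * r * d), 1 + ε * p]).det.natAbs = N
  omega
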